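/- Let V be an open subset of the unit disc D and let φ : V → ℝ be a smooth positive function. Define β := ∂_{w̄} log φ + (1 + w)/((1 − |w|²)(1 + w̄)) and Φ := −i·(1 − |w|²)·((1 + w)/(1 + w̄))·∂_w log φ. Then the pair (β, Φ) satisfies the hyperbolic vortex equations (V1) and (V2) on V if and only if φ is harmonic on V, i.e. (∂_x² + ∂_y²)φ = 0 where w = x + iy. -/

import Mathlib

open Complex ComplexConjugate

set_option maxHeartbeats 4000000

noncomputable section

/-- Wirtinger derivative ∂_z f = (1/2)(∂_t f − i ∂_r f). -/
def wdz (f : ℂ → ℂ) (z : ℂ) : ℂ :=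
  (2:ℂ)⁻¹ * (fderiv ℝ f z 1 - Complex.I * fderiv ℝ f z Complex.I)

/-- Wirtinger derivative ∂_z̄ f = (1/2)(∂_t f + i ∂_r f). -/
def wdzbar (f : ℂ → ℂ) (z : ℂ) : ℂ :=
  (2:ℂ)⁻¹ * (fderiv ℝ f z 1 + Complex.I * fderiv ℝ f z Complex.I)

/-- A real-valued function regarded as complex-valued. -/
def cre (φ : ℂ → ℝ) : ℂ → ℂ := fun z => (φ z : ℂ)

/-- ∂_z log φ := (∂_z φ)/φ for positive real φ. -/
def dzlog (φ : ℂ → ℝ) (z : ℂ) : ℂ := wdz (cre φ) z / (φ z : ℂ)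

/-- ∂_z̄ log φ := (∂_z̄ φ)/φ for positive real φ. -/
def dzbarlog (φ : ℂ → ℝ) (z : ℂ) : ℂ := wdzbar (cre φ) z / (φ z : ℂ)

/-- Flat Laplacian ∂_t² + ∂_r² on ℂ ≅ ℝ², where z = t + ir. -/
def lap2 (φ : ℂ → ℝ) (z : ℂ) : ℝ :=
  fderiv ℝ (fun w => fderiv ℝ φ w 1) z 1 +
  fderiv ℝ (fun w => fderiv ℝ φ w Complex.I) z Complex.I

/-- The upper half-plane. -/
def H : Set ℂ := {z : ℂ | 0 < z.im}

/-- The connection coefficient β = ∂_z̄ log φ + 1/(z − z̄) of the vortex ansatz. -/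
def betaOf (φ : ℂ → ℝ) (z : ℂ) : ℂ := dzbarlog φ z + 1 / (z - conj z)

/-- The Higgs field Φ = i(z − z̄)·∂_z log φ of the vortex ansatz. -/
def higgsOf (φ : ℂ → ℝ) (z : ℂ) : ℂ := Complex.I * (z - conj z) * dzlog φ z

/-- The open unit disc. -/
def Ddisc : Set ℂ := {w : ℂ | ‖w‖ < 1}

/-- The disc-model connection coefficient β = ∂_w̄ log φ + (1+w)/((1−|w|²)(1+w̄)). -/
def betaD (φ : ℂ → ℝ) (w : ℂ) : ℂ :=
  dzbarlog φ w + (1 + w) / (((1 - Complex.normSq w : ℝ) : ℂ) * (1 + conj w))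

/-- The disc-model Higgs field Φ = −i(1−|w|²)((1+w)/(1+w̄))·∂_w log φ. -/
def higgsD (φ : ℂ → ℝ) (w : ℂ) : ℂ :=
  -Complex.I * ((1 - Complex.normSq w : ℝ) : ℂ) * ((1 + w) / (1 + conj w)) * dzlog φ w

namespace Vortex

def wCLM (a b : ℂ) : ℂ →L[ℝ] ℂ :=
  a • (ContinuousLinearMap.id ℝ ℂ) + b • (Complex.conjCLE.toContinuousLinearMap)

@[simp] lemma wCLM_apply (a b v : ℂ) : wCLM a b v = a * v + b * conj v := by
  simp [wCLM, smul_eq_mul, Complex.conjCLE_apply]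

def HasWDAt (f : ℂ → ℂ) (a b : ℂ) (z : ℂ) : Prop := HasFDerivAt f (wCLM a b) z

lemma HasWDAt.wdz_eq {f : ℂ → ℂ} {a b z : ℂ} (h : HasWDAt f a b z) : wdz f z = a := by
  rw [wdz, h.fderiv]
  simp [Complex.conj_I]
  linear_combination ((b - a)/2) * Complex.I_sq

lemma HasWDAt.wdzbar_eq {f : ℂ → ℂ} {a b z : ℂ} (h : HasWDAt f a b z) : wdzbar f z = b := by
  rw [wdzbar, h.fderiv]
  simp [Complex.conj_I]
  linear_combination ((a - b)/2) * Complex.I_sq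

lemma HasWDAt.congr_deriv {f : ℂ → ℂ} {a b a' b' z : ℂ} (h : HasWDAt f a b z)
    (ha : a' = a) (hb : b' = b) : HasWDAt f a' b' z := by rw [HasWDAt, ha, hb]; exact h

lemma hasWDAt_const (c z : ℂ) : HasWDAt (fun _ => c) 0 0 z := by
  have h : wCLM 0 0 = 0 := by ext v; simp
  rw [HasWDAt, h]; exact hasFDerivAt_const c z

lemma hasWDAt_id (z : ℂ) : HasWDAt (fun w => w) 1 0 z := by
  have h : wCLM 1 0 = ContinuousLinearMap.id ℝ ℂ := by ext v; simp
  rw [HasWDAt, h]; exact hasFDerivAt_id z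

lemma hasWDAt_conj (z : ℂ) : HasWDAt (fun w => conj w) 0 1 z := by
  have h : wCLM 0 1 = Complex.conjCLE.toContinuousLinearMap := by ext v; simp
  rw [HasWDAt, h]
  exact Complex.conjCLE.toContinuousLinearMap.hasFDerivAt.congr_of_eventuallyEq
    (by filter_upwards with x; simp)

lemma HasWDAt.add {f g : ℂ → ℂ} {a b a' b' z : ℂ} (hf : HasWDAt f a b z)
    (hg : HasWDAt g a' b' z) : HasWDAt (fun w => f w + g w) (a + a') (b + b') z := by
  have h : wCLM (a + a') (b + b') = wCLM a b + wCLM a' b' := by ext v; simp; ring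
  rw [HasWDAt, h]; exact HasFDerivAt.add hf hg

lemma HasWDAt.sub {f g : ℂ → ℂ} {a b a' b' z : ℂ} (hf : HasWDAt f a b z)
    (hg : HasWDAt g a' b' z) : HasWDAt (fun w => f w - g w) (a - a') (b - b') z := by
  have h : wCLM (a - a') (b - b') = wCLM a b - wCLM a' b' := by ext v; simp; ring
  rw [HasWDAt, h]; exact HasFDerivAt.sub hf hg

lemma HasWDAt.mul {f g : ℂ → ℂ} {a b a' b' z : ℂ} (hf : HasWDAt f a b z)
    (hg : HasWDAt g a' b' z) :
    HasWDAt (fun w => f w * g w) (f z * a' + g z * a) (f z * b' + g z * b) z := by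
  have h : wCLM (f z * a' + g z * a) (f z * b' + g z * b)
      = f z • wCLM a' b' + g z • wCLM a b := by
    ext v; simp [smul_eq_mul]; ring
  rw [HasWDAt, h]
  exact HasFDerivAt.mul hf hg

lemma HasWDAt.conjComp {f : ℂ → ℂ} {a b z : ℂ} (hf : HasWDAt f a b z) :
    HasWDAt (fun w => conj (f w)) (conj b) (conj a) z := by
  have h : wCLM (conj b) (conj a)
      = (Complex.conjCLE.toContinuousLinearMap).comp (wCLM a b) := by
    ext v; simp; ring
  rw [HasWDAt, h]
  exact (Complex.conjCLE.toContinuousLinearMap.hasFDerivAt.comp z hf).congr_of_eventuallyEq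
    (by filter_upwards with x; simp [Function.comp])

lemma HasWDAt.inv {f : ℂ → ℂ} {a b z : ℂ} (hf : HasWDAt f a b z) (h0 : f z ≠ 0) :
    HasWDAt (fun w => (f w)⁻¹) (-a / (f z)^2) (-b / (f z)^2) z := by
  have h1 : HasFDerivAt (fun y : ℂ => y⁻¹)
      ((ContinuousLinearMap.smulRight (1 : ℂ →L[ℂ] ℂ) (-((f z)^2)⁻¹)).restrictScalars ℝ)
      (f z) := ((hasDerivAt_inv h0).hasFDerivAt).restrictScalars ℝ
  have h2 := h1.comp z hf
  have h : wCLM (-a / (f z)^2) (-b / (f z)^2)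
      = ((ContinuousLinearMap.smulRight (1 : ℂ →L[ℂ] ℂ) (-((f z)^2)⁻¹)).restrictScalars ℝ).comp
        (wCLM a b) := by
    ext v
    simp [smul_eq_mul]
    field_simp
    ring
  rw [HasWDAt, h]
  exact h2.congr_of_eventuallyEq (by filter_upwards with x; simp [Function.comp])

lemma HasWDAt.congr_fun {f g : ℂ → ℂ} {a b z : ℂ} (h : HasWDAt f a b z)
    (hg : ∀ᶠ x in nhds z, g x = f x) : HasWDAt g a b z :=
  HasFDerivAt.congr_of_eventuallyEq h hg

lemma hasWDAt_cre {φ : ℂ → ℝ} {L : ℂ →L[ℝ] ℝ} {z : ℂ} (h : HasFDerivAt φ L z) :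
    HasWDAt (cre φ) ((2:ℂ)⁻¹ * ((L 1 : ℝ) - Complex.I * (L Complex.I : ℝ)))
      ((2:ℂ)⁻¹ * ((L 1 : ℝ) + Complex.I * (L Complex.I : ℝ))) z := by
  have h1 : HasFDerivAt (cre φ) (Complex.ofRealCLM.comp L) z :=
    (Complex.ofRealCLM.hasFDerivAt.comp z h)
  have heq : wCLM ((2:ℂ)⁻¹ * ((L 1 : ℝ) - Complex.I * (L Complex.I : ℝ)))
      ((2:ℂ)⁻¹ * ((L 1 : ℝ) + Complex.I * (L Complex.I : ℝ))) = Complex.ofRealCLM.comp L := by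
    ext v
    have hv : (v : ℂ) = (v.re : ℝ) • (1:ℂ) + (v.im : ℝ) • Complex.I := by
      simp [Complex.real_smul, Complex.re_add_im]
    have hLv : L v = v.re * L 1 + v.im * L Complex.I := by
      conv_lhs => rw [hv]
      rw [map_add, map_smul, map_smul]; simp
    simp only [wCLM_apply, ContinuousLinearMap.coe_comp', Function.comp_apply,
      Complex.ofRealCLM_apply, hLv]
    apply Complex.ext <;>
      simp [Complex.mul_re, Complex.mul_im, Complex.add_re, Complex.add_im] <;> ring
  rw [HasWDAt, heq]; exact h1

/-- The key pointwise computation. -/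
lemma key (V : Set ℂ) (hV : IsOpen V) (hVD : V ⊆ Ddisc) (φ : ℂ → ℝ)
    (hφ : ContDiffOn ℝ (⊤ : ℕ∞) φ V) (hpos : ∀ w ∈ V, 0 < φ w) {w : ℂ} (hw : w ∈ V) :
    wdzbar (higgsD φ) w + betaD φ w * higgsD φ w
      = -Complex.I * (1 - w * conj w) * ((1 + w) * (1 + conj w)⁻¹) *
          ((lap2 φ w : ℝ) / (4 * (φ w : ℂ))) ∧
    (1 - Complex.normSq w)^2 * (wdz (betaD φ) w).re
      = 1 - Complex.normSq (higgsD φ w)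
        + (1 - Complex.normSq w)^2 * lap2 φ w / (4 * φ w) := by
  classical
  have hwD : ‖w‖ < 1 := hVD hw
  have hVn : V ∈ nhds w := hV.mem_nhds hw
  have hφw0 : (0:ℝ) < φ w := hpos w hw
  have hF0 : ((φ w : ℝ) : ℂ) ≠ 0 := by exact_mod_cast hφw0.ne'
  have hnsq : Complex.normSq w < 1 := by
    rw [Complex.normSq_eq_norm_sq]; nlinarith [norm_nonneg w]
  have hns : (1 - Complex.normSq w : ℝ) ≠ 0 := by linarith
  have hNw : (1:ℂ) - w * conj w ≠ 0 := by
    rw [Complex.mul_conj]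
    exact_mod_cast (show ((1 - Complex.normSq w : ℝ) : ℂ) ≠ 0 by exact_mod_cast hns)
  have h1w : (1:ℂ) + w ≠ 0 := by
    intro h
    have hw1 : w = -1 := by linear_combination h
    rw [hw1] at hwD; simp at hwD
  have h1c : (1:ℂ) + conj w ≠ 0 := by
    intro h
    have hw1 : conj w = -1 := by linear_combination h
    have : ‖conj w‖ = 1 := by rw [hw1]; simp
    rw [Complex.norm_conj] at this
    rw [this] at hwD; simp at hwD
  -- derivative infrastructure
  have hder : ∀ z ∈ V, HasFDerivAt φ (fderiv ℝ φ z) z := fun z hz =>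
    ((hφ.contDiffAt (hV.mem_nhds hz)).differentiableAt (by simp)).hasFDerivAt
  set p : ℂ → ℝ := fun z => fderiv ℝ φ z 1 with hp_def
  set q : ℂ → ℝ := fun z => fderiv ℝ φ z Complex.I with hq_def
  set ψ : ℂ → ℂ := fun z => (2:ℂ)⁻¹ * (cre p z - Complex.I * cre q z) with hψ_def
  have hfdV : ContDiffOn ℝ 1 (fun z => fderiv ℝ φ z) V := hφ.fderiv_of_isOpen hV (WithTop.coe_le_coe.mpr le_top)
  have hfdw : DifferentiableAt ℝ (fun z => fderiv ℝ φ z) w :=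
    (hfdV.contDiffAt hVn).differentiableAt one_ne_zero
  have hpw : DifferentiableAt ℝ p w := hfdw.clm_apply (differentiableAt_const _)
  have hqw : DifferentiableAt ℝ q w := hfdw.clm_apply (differentiableAt_const _)
  -- symmetry of second derivatives
  have hsymm : fderiv ℝ p w Complex.I = fderiv ℝ q w 1 := by
    have hs := (hφ.contDiffAt hVn).isSymmSndFDerivAt
      (by rw [minSmoothness_of_isRCLikeNormedField]; exact WithTop.coe_le_coe.mpr le_top)
    have hep : fderiv ℝ p w = (fderiv ℝ (fun z => fderiv ℝ φ z) w).flip 1 := by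
      rw [hp_def]
      rw [fderiv_clm_apply hfdw (differentiableAt_const _)]
      simp
    have heq2 : fderiv ℝ q w = (fderiv ℝ (fun z => fderiv ℝ φ z) w).flip Complex.I := by
      rw [hq_def]
      rw [fderiv_clm_apply hfdw (differentiableAt_const _)]
      simp
    rw [hep, heq2]
    simpa using hs Complex.I 1
  have hsymmC : ((fderiv ℝ p w Complex.I : ℝ) : ℂ) = ((fderiv ℝ q w 1 : ℝ) : ℂ) := by
    rw [hsymm]
  have hlap : lap2 φ w = fderiv ℝ p w 1 + fderiv ℝ q w Complex.I := rfl
  -- wirtinger derivatives of components at w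
  have hpc := hasWDAt_cre hpw.hasFDerivAt
  have hqc := hasWDAt_cre hqw.hasFDerivAt
  have hψw : HasWDAt (fun z => (2:ℂ)⁻¹ * (cre p z - Complex.I * cre q z))
      ((((fderiv ℝ p w 1 : ℝ):ℂ) - Complex.I * ((fderiv ℝ p w Complex.I : ℝ):ℂ)
        - Complex.I * ((fderiv ℝ q w 1 : ℝ):ℂ) - ((fderiv ℝ q w Complex.I : ℝ):ℂ)) / 4)
      (((lap2 φ w : ℝ):ℂ) / 4) w := by
    refine ((hasWDAt_const ((2:ℂ)⁻¹) w).mul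
      (hpc.sub ((hasWDAt_const Complex.I w).mul hqc))).congr_deriv ?_ ?_
    · linear_combination (-((fderiv ℝ q w Complex.I : ℝ):ℂ)/4) * Complex.I_sq
    · rw [hlap]
      push_cast
      rw [← hsymmC]
      linear_combination (((fderiv ℝ q w Complex.I : ℝ):ℂ)/4) * Complex.I_sq
  have hψc : HasWDAt (fun z => conj ((2:ℂ)⁻¹ * (cre p z - Complex.I * cre q z)))
      (((lap2 φ w : ℝ):ℂ) / 4)
      ((((fderiv ℝ p w 1 : ℝ):ℂ) + Complex.I * ((fderiv ℝ p w Complex.I : ℝ):ℂ)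
        + Complex.I * ((fderiv ℝ q w 1 : ℝ):ℂ) - ((fderiv ℝ q w Complex.I : ℝ):ℂ)) / 4) w := by
    refine hψw.conjComp.congr_deriv ?_ ?_
    · rw [map_div₀, Complex.conj_ofReal, map_ofNat]
    · rw [map_div₀, map_sub, map_sub, map_sub, map_mul, map_mul, map_ofNat]
      simp only [Complex.conj_I, Complex.conj_ofReal]
      ring
  have hFc : HasWDAt (cre φ)
      (((p w : ℝ):ℂ) / 2 - Complex.I * ((q w : ℝ):ℂ) / 2)
      (((p w : ℝ):ℂ) / 2 + Complex.I * ((q w : ℝ):ℂ) / 2) w := by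
    refine (hasWDAt_cre (hder w hw)).congr_deriv ?_ ?_ <;>
      · simp only [hp_def, hq_def]; ring
  have hFinv := hFc.inv hF0
  have hN := (hasWDAt_const (1:ℂ) w).sub ((hasWDAt_id w).mul (hasWDAt_conj w))
  have hK := ((hasWDAt_const (1:ℂ) w).add (hasWDAt_conj w)).inv (by simpa using h1c)
  -- pointwise identities on V
  have hψz : ∀ z ∈ V, wdz (cre φ) z = ψ z := fun z hz =>
    (hasWDAt_cre (hder z hz)).wdz_eq
  have hψbz : ∀ z ∈ V, wdzbar (cre φ) z = conj (ψ z) := by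
    intro z hz
    rw [(hasWDAt_cre (hder z hz)).wdzbar_eq]
    simp only [hψ_def, cre]
    rw [map_mul, map_inv₀, map_sub, map_mul]
    simp only [Complex.conj_I, Complex.conj_ofReal, map_ofNat]
    ring
  have hHeq : ∀ z ∈ V, higgsD φ z
      = -Complex.I * ((1:ℂ) - z * conj z) * (((1:ℂ) + z) * ((1:ℂ) + conj z)⁻¹)
        * ((2:ℂ)⁻¹ * (cre p z - Complex.I * cre q z) * (cre φ z)⁻¹) := by
    intro z hz
    simp only [higgsD, dzlog]
    rw [hψz z hz, div_eq_mul_inv, div_eq_mul_inv]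
    rw [Complex.ofReal_sub, Complex.ofReal_one, Complex.mul_conj]
    rfl
  have hBeq : ∀ z ∈ V, betaD φ z
      = conj ((2:ℂ)⁻¹ * (cre p z - Complex.I * cre q z)) * (cre φ z)⁻¹
        + ((1:ℂ) + z) * ((((1:ℂ) - z * conj z) * ((1:ℂ) + conj z))⁻¹) := by
    intro z hz
    simp only [betaD, dzbarlog]
    rw [hψbz z hz, div_eq_mul_inv, div_eq_mul_inv]
    rw [Complex.ofReal_sub, Complex.ofReal_one, Complex.mul_conj]
    rfl
  -- Wirtinger derivative of higgsD at w
  have hHchain := (((hasWDAt_const (-Complex.I) w).mul hN).mul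
      (((hasWDAt_const (1:ℂ) w).add (hasWDAt_id w)).mul hK)).mul (hψw.mul hFinv)
  have hHig := hHchain.congr_fun (by
    filter_upwards [hVn] with z hz
    exact hHeq z hz)
  have e1 := hHig.wdzbar_eq
  -- Wirtinger derivative of betaD at w
  have hden : ((1:ℂ) - w * conj w) * ((1:ℂ) + conj w) ≠ 0 := mul_ne_zero hNw h1c
  have hBchain := (hψc.mul hFinv).add
      (((hasWDAt_const (1:ℂ) w).add (hasWDAt_id w)).mul
        ((hN.mul ((hasWDAt_const (1:ℂ) w).add (hasWDAt_conj w))).inv (by simpa using hden)))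
  have hBeta := hBchain.congr_fun (by
    filter_upwards [hVn] with z hz
    exact hBeq z hz)
  have e2 := hBeta.wdz_eq
  constructor
  · rw [e1, hBeq w hw, hHeq w hw]
    simp only [cre, map_mul, map_inv₀, map_sub, map_add, Complex.conj_I,
      Complex.conj_ofReal, map_ofNat, Complex.conj_conj]
    simp only [div_eq_mul_inv, mul_inv, ← inv_pow]
    linear_combination
      (-Complex.I * (1+w)^2 * (((1:ℂ) + conj w)⁻¹)^2
          * ((2:ℂ)⁻¹ * (((p w : ℝ):ℂ) - Complex.I * ((q w : ℝ):ℂ)))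
          * (((φ w : ℝ):ℂ))⁻¹) * mul_inv_cancel₀ hNw +
      (-Complex.I * ((2:ℂ)⁻¹ * (((p w : ℝ):ℂ) - Complex.I * ((q w : ℝ):ℂ)))
          * (((φ w : ℝ):ℂ))⁻¹ * (1+w) * (((1:ℂ) + conj w)⁻¹) * w) * mul_inv_cancel₀ h1c
  · have hre : wdz (betaD φ) w
        = ((lap2 φ w / (4 * φ w)
            - ((p w)^2 + (q w)^2) / (4 * φ w^2)
            + ((1 - Complex.normSq w)^2)⁻¹ : ℝ) : ℂ) := by
      rw [e2]
      simp only [cre, map_mul, map_inv₀, map_sub, map_add, Complex.conj_I,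
        Complex.conj_ofReal, map_ofNat, Complex.conj_conj]
      push_cast
      rw [show ((Complex.normSq w : ℝ) : ℂ) = w * conj w from (Complex.mul_conj w).symm]
      simp only [div_eq_mul_inv, mul_inv, ← inv_pow]
      linear_combination
        (((q w : ℝ):ℂ)^2 * ((((φ w : ℝ):ℂ))⁻¹)^2 / 4) * Complex.I_sq +
        ((1+w) * conj w * (((1:ℂ) - w * conj w)⁻¹)^2 * (((1:ℂ) + conj w)⁻¹)
            + (((1:ℂ) - w * conj w)⁻¹)^2) * mul_inv_cancel₀ h1c
        - ((((1:ℂ) - w * conj w)⁻¹) * (((1:ℂ) + conj w)⁻¹)) * mul_inv_cancel₀ hNw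
    have hnsH : Complex.normSq (higgsD φ w)
        = (1 - Complex.normSq w)^2 * ((p w)^2 + (q w)^2)
          / (4 * φ w^2) := by
      rw [← Complex.ofReal_inj]
      rw [show ((Complex.normSq (higgsD φ w) : ℝ) : ℂ)
        = higgsD φ w * conj (higgsD φ w) from (Complex.mul_conj _).symm]
      rw [hHeq w hw]
      simp only [cre, map_add, map_sub, map_mul, map_inv₀, map_neg, map_one, map_ofNat,
        Complex.conj_conj, Complex.conj_I, Complex.conj_ofReal]
      push_cast
      rw [show ((Complex.normSq w : ℝ) : ℂ) = w * conj w from (Complex.mul_conj w).symm]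
      simp only [div_eq_mul_inv, mul_inv, ← inv_pow]
      linear_combination
        (((1:ℂ) - w * conj w)^2 * (1+w) * (1 + conj w) * (((1:ℂ) + conj w)⁻¹)
            * (((1:ℂ) + w)⁻¹) * ((((φ w : ℝ):ℂ))⁻¹)^2 / 4
            * (-((p w : ℝ):ℂ)^2 + (Complex.I^2 - 1) * ((q w : ℝ):ℂ)^2)) * Complex.I_sq +
        ((((p w : ℝ):ℂ)^2 + ((q w : ℝ):ℂ)^2)/4 * ((1:ℂ) - w * conj w)^2 * (1+w)
            * (((1:ℂ) + w)⁻¹) * ((((φ w : ℝ):ℂ))⁻¹)^2) * mul_inv_cancel₀ h1c +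
        ((((p w : ℝ):ℂ)^2 + ((q w : ℝ):ℂ)^2)/4 * ((1:ℂ) - w * conj w)^2
            * ((((φ w : ℝ):ℂ))⁻¹)^2) * mul_inv_cancel₀ h1w
    rw [hre, Complex.ofReal_re, hnsH]
    field_simp
    ring

end Vortex

theorem disc_vortex_ansatz_iff_harmonic (V : Set ℂ) (hV : IsOpen V) (hVD : V ⊆ Ddisc)
    (φ : ℂ → ℝ) (hφ : ContDiffOn ℝ (⊤ : ℕ∞) φ V) (hpos : ∀ w ∈ V, 0 < φ w) :
    (∀ w ∈ V,
      wdzbar (higgsD φ) w + betaD φ w * higgsD φ w = 0 ∧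
      (1 - Complex.normSq w)^2 * (wdz (betaD φ) w).re = 1 - Complex.normSq (higgsD φ w)) ↔
    (∀ w ∈ V, lap2 φ w = 0) := by
  constructor
  · intro h w hw
    obtain ⟨h1, -⟩ := h w hw
    have k := (Vortex.key V hV hVD φ hφ hpos hw).1
    rw [h1] at k
    have hwD : ‖w‖ < 1 := hVD hw
    have hφw0 : (0:ℝ) < φ w := hpos w hw
    have hF0 : ((φ w : ℝ) : ℂ) ≠ 0 := by exact_mod_cast hφw0.ne'
    have hnsq : Complex.normSq w < 1 := by
      rw [Complex.normSq_eq_norm_sq]; nlinarith [norm_nonneg w]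
    have hns : (1 - Complex.normSq w : ℝ) ≠ 0 := by linarith
    have hNw : (1:ℂ) - w * conj w ≠ 0 := by
      rw [Complex.mul_conj]
      exact_mod_cast (show ((1 - Complex.normSq w : ℝ) : ℂ) ≠ 0 by exact_mod_cast hns)
    have h1w : (1:ℂ) + w ≠ 0 := by
      intro hcon
      have hw1 : w = -1 := by linear_combination hcon
      rw [hw1] at hwD; simp at hwD
    have h1c : (1:ℂ) + conj w ≠ 0 := by
      intro hcon
      have hw1 : conj w = -1 := by linear_combination hcon
      have habs : ‖conj w‖ = 1 := by rw [hw1]; simp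
      rw [Complex.norm_conj] at habs
      rw [habs] at hwD; simp at hwD
    have k2 := k.symm
    -- k2 : -I * (1 - w * conj w) * ((1 + w) * (1 + conj w)⁻¹) * (lap / (4 * φ w)) = 0
    have hfac : -Complex.I * (1 - w * conj w) * ((1 + w) * (1 + conj w)⁻¹) ≠ 0 := by
      apply mul_ne_zero
      apply mul_ne_zero
      · simpa using Complex.I_ne_zero
      · exact hNw
      · exact mul_ne_zero h1w (inv_ne_zero h1c)
    have hquot : ((lap2 φ w : ℝ) : ℂ) / (4 * (φ w : ℂ)) = 0 :=
      (mul_eq_zero.mp k2).resolve_left hfac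
    have h4 : (4 : ℂ) * (φ w : ℂ) ≠ 0 := by
      apply mul_ne_zero _ hF0
      norm_num
    have : ((lap2 φ w : ℝ) : ℂ) = 0 := by
      rcases div_eq_zero_iff.mp hquot with h | h
      · exact h
      · exact absurd h h4
    exact_mod_cast this
  · intro h w hw
    obtain ⟨k1, k2⟩ := Vortex.key V hV hVD φ hφ hpos hw
    rw [h w hw] at k1 k2
    constructor
    · rw [k1]; simp
    · rw [k2]; simp
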